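/- arXiv:0802.0337 — 2 statements merged into one kernel-verified Lean document; each statement's English description precedes it below -/
import Mathlib

section
/- Let G be a topological group and (G_n)_{n∈ω} a sequence of subgroups of G. Then the multiplication map p : ⊡_{n∈ω} G_n → G defined by p(x_0, …, x_k, e, e, …) = x_0 · x_1 ⋯ x_k is continuous. -/
open Filter Set TopologicalSpace

/-- The box topology on a countable product. -/
def boxTop (X : ℕ → Type*) [∀ n, TopologicalSpace (X n)] :
    TopologicalSpace (∀ n, X n) :=
  TopologicalSpace.generateFrom
    {S | ∃ U : ∀ n, Set (X n), (∀ n, IsOpen (U n)) ∧ S = Set.univ.pi U}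

/-!
Near a point `x` with `x n = 1` for `n ≥ N`, split `y₀ ⋯ y_M = (y₀ ⋯ y_{N-1}) · (y_N ⋯ y_M)`.
The head depends continuously on finitely many coordinates. For the tail choose open
neighbourhoods `S k` of `1` with `S (k + 1) * S (k + 1) ⊆ S k`: if each `y i`, `i ≥ N`, lies in
`S (i + 1)`, then every tail product lies in `S N`, whatever `M` is. Confining infinitely many
coordinates at once is exactly what the box topology allows.
-/

open scoped Pointwise Topology

section BoxTopology

variable {X : ℕ → Type*} [∀ n, TopologicalSpace (X n)]

theorem isOpen_univ_pi_boxTop {U : ∀ n, Set (X n)} (hU : ∀ n, IsOpen (U n)) :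
    IsOpen[boxTop X] (univ.pi U) :=
  isOpen_generateFrom_of_mem ⟨U, hU, rfl⟩

theorem univ_pi_mem_nhds_boxTop {U : ∀ n, Set (X n)} (hU : ∀ n, IsOpen (U n)) {x : ∀ n, X n}
    (hx : ∀ n, x n ∈ U n) : univ.pi U ∈ @nhds _ (boxTop X) x :=
  @IsOpen.mem_nhds _ (boxTop X) _ _ (isOpen_univ_pi_boxTop hU) fun n _ => hx n

theorem continuous_apply_boxTop (i : ℕ) : Continuous[boxTop X, _] fun z : ∀ n, X n => z i := by
  let _ := boxTop X
  refine continuous_def.2 fun s hs => ?_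
  rw [show (fun z : ∀ n, X n => z i) ⁻¹' s = _ from eval_preimage]
  refine isOpen_univ_pi_boxTop fun n => ?_
  rcases eq_or_ne n i with rfl | hn
  · simpa using hs
  · simp [hn]

end BoxTopology

section ProductsInGroups

variable {G : Type*} [Group G]

theorem inv_mul_list_prod_range_mul_mem {S : ℕ → Set G} (hS : ∀ k, S (k + 1) * S (k + 1) ⊆ S k)
    {y : ℕ → G} {N : ℕ} (hy : ∀ i, N ≤ i → y i ∈ S (i + 1)) {M : ℕ} (hNM : N ≤ M) {s : G}
    (hs : s ∈ S M) :
    ((List.range N).map y).prod⁻¹ * ((List.range M).map y).prod * s ∈ S N := by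
  induction M, hNM using Nat.le_induction generalizing s with
  | base => simpa using hs
  | succ M hNM ih =>
    rw [List.prod_range_succ, ← mul_assoc, mul_assoc _ (y M)]
    exact ih (hS M (mul_mem_mul (hy M hNM) hs))

variable [TopologicalSpace G] [ContinuousMul G]

theorem exists_open_nhds_one_seq_mul_subset {B : Set G} (hB : B ∈ 𝓝 1) :
    ∃ S : ℕ → Set G, (∀ k, IsOpen (S k)) ∧ (∀ k, (1 : G) ∈ S k) ∧
      (∀ k, S (k + 1) * S (k + 1) ⊆ S k) ∧ ∀ k, S k ⊆ B := by
  choose! f hf_open hf_one hf_mul using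
    fun U : Set G => (exists_open_nhds_one_mul_subset : U ∈ 𝓝 1 → _)
  have hf_sub {U : Set G} (hU : U ∈ 𝓝 1) : f U ⊆ U := fun v hv =>
    hf_mul U hU (by simpa using mul_mem_mul hv (hf_one U hU))
  set T : ℕ → Set G := fun k => f^[k] B
  have hT_succ (k : ℕ) : T (k + 1) = f (T k) := Function.iterate_succ_apply' f k B
  have hT (k : ℕ) : T k ∈ 𝓝 1 := by
    induction k with
    | zero => exact hB
    | succ k ih => rw [hT_succ]; exact (hf_open _ ih).mem_nhds (hf_one _ ih)
  have hT_anti : Antitone T := antitone_nat_of_succ_le fun k => hT_succ k ▸ hf_sub (hT k)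
  refine ⟨fun k => f (T k), fun k => hf_open _ (hT k), fun k => hf_one _ (hT k), fun k => ?_,
    fun k => (hf_sub (hT k)).trans (hT_anti k.zero_le)⟩
  simpa only [← hT_succ] using hf_mul _ (hT (k + 1))

theorem eventually_nhds_boxTop_inv_mul_list_prod_mem {x : ℕ → G} {N : ℕ}
    (hx : ∀ n, N ≤ n → x n = 1) {B : Set G} (hB : B ∈ 𝓝 1) :
    ∀ᶠ z in @nhds _ (boxTop fun _ => G) x, ∀ M, N ≤ M →
      ((List.range N).map z).prod⁻¹ * ((List.range M).map z).prod ∈ B := by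
  obtain ⟨S, hS_open, hS_one, hS_mul, hS_sub⟩ := exists_open_nhds_one_seq_mul_subset hB
  have hbox : univ.pi (fun i => if N ≤ i then S (i + 1) else univ) ∈
      @nhds _ (boxTop fun _ => G) x := by
    refine univ_pi_mem_nhds_boxTop (fun i => ?_) (fun i => ?_) <;> split_ifs with hi
    exacts [hS_open _, isOpen_univ, hx i hi ▸ hS_one _, mem_univ _]
  filter_upwards [hbox] with z hz M hNM
  have hz' : ∀ i, N ≤ i → z i ∈ S (i + 1) := fun i hi => by simpa [hi] using hz i (mem_univ i)
  simpa using hS_sub N (inv_mul_list_prod_range_mul_mem hS_mul hz' hNM (hS_one M))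

theorem eventually_nhds_boxTop_list_prod_mem {x : ℕ → G} {N : ℕ} (hx : ∀ n, N ≤ n → x n = 1)
    {V : Set G} (hV : V ∈ 𝓝 ((List.range N).map x).prod) :
    ∀ᶠ z in @nhds _ (boxTop fun _ => G) x, ∀ M, N ≤ M → ((List.range M).map z).prod ∈ V := by
  let _ := boxTop fun _ => G
  rw [← nhds_mul_nhds_one] at hV
  obtain ⟨A, hA, B, hB, hAB⟩ := Filter.mem_mul.1 hV
  have hhead : Continuous[boxTop fun _ => G, _] fun z : ℕ → G => ((List.range N).map z).prod :=
    continuous_list_prod _ fun i _ => continuous_apply_boxTop i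
  filter_upwards [hhead.continuousAt.preimage_mem_nhds hA,
    eventually_nhds_boxTop_inv_mul_list_prod_mem hx hB] with z hzA hzB M hNM
  simpa using hAB (mul_mem_mul (a := ((List.range N).map z).prod) hzA (hzB M hNM))

end ProductsInGroups

/-- Let `G` be a topological group and `(Gₙ)` a sequence of subgroups.  The multiplication
map `p : ⊡ₙ Gₙ → G`, `p(x₀,…,x_k,e,e,…) = x₀·x₁⋯x_k`, is continuous with respect to the
small box topology. -/
theorem smallBox_mul_continuous (G : Type*) [Group G] [TopologicalSpace G]
    [IsTopologicalGroup G] (Gn : ℕ → Subgroup G)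
    (p : {x : ∀ _ : ℕ, G // (∀ n, x n ∈ Gn n) ∧ ∀ᶠ n in Filter.atTop, x n = 1} → G)
    (hp : ∀ x, ∀ N : ℕ, (∀ n, N ≤ n → x.val n = 1) →
      p x = ((List.range N).map x.val).prod) :
    @Continuous _ _ ((boxTop fun _ : ℕ => G).induced Subtype.val) inferInstance p := by
  let _ : TopologicalSpace (ℕ → G) := boxTop _
  refine continuous_iff_continuousAt.2 fun x => ?_
  obtain ⟨N, hN⟩ := x.2.2.exists_forall_of_atTop
  rw [ContinuousAt, hp x N hN, nhds_induced]
  refine fun V hV => mem_map.2 ?_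
  filter_upwards [(eventually_nhds_boxTop_list_prod_mem hN hV).comap Subtype.val] with y hy
  obtain ⟨M, hM⟩ := y.2.2.exists_forall_of_atTop
  rw [mem_preimage, hp y (max N M) fun n hn => hM n (le_of_max_le_right hn)]
  exact hy _ (le_max_left N M)
end

section
/- Let G be a paracompact topological group equal to the union of an increasing sequence of subgroups (G_n)_{n∈ω} with a continuous multiplication map p : ⊡_{n∈ω} G_n → G admitting a local section at the identity, and let H ≤ G be a subgroup. If H ∩ G_n is homotopy dense in G_n for each n, then H is homotopy dense in G. -/
/-!
Near `1`, the homotopy `hₜ = p ∘ Φₜ ∘ s` deforms the domain of the section into `H`: `Φ` applies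
homotopies of `Gₙ` into `H ∩ Gₙ`, normalized to fix `1`, coordinatewise on `⊡ₙ Gₙ`. It is
continuous for the box topology because almost all coordinates sit at `1` and `[0, 1]` is compact.
Near `g ∈ Gₘ` it is translated to `x ↦ γ(t) · hₜ(g⁻¹ x)`, where `γ` is the track of `g` under a
homotopy of `Gₘ` into `H ∩ Gₘ`.

The local homotopies `uᵢ` are glued along a partition of unity `(λᵢ)`, with the indices
well-ordered, by the telescoping product `∏ᵢ uᵢ(x, t sᵢ) uᵢ(x, t sᵢ₊₁)⁻¹ · x`, where
`sᵢ = ∑_{j ≥ i} λⱼ(x)`. All `uᵢ` defined at `x` agree modulo `H` at each time, so its left coset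
modulo `H` is that of `uᵢ(x, t) ∈ H`.
-/

open Filter Set TopologicalSpace

/-- A subset `A` of a space `X` is homotopy dense if there is a homotopy `φₜ : X → X`
with `φ₀ = id` and `φₜ(X) ⊆ A` for `t ∈ (0,1]`. -/
def HomotopyDense {X : Type*} [TopologicalSpace X] (A : Set X) : Prop :=
  ∃ φ : X × unitInterval → X, Continuous φ ∧ (∀ x, φ (x, 0) = x) ∧
    ∀ x t, t ≠ 0 → φ (x, t) ∈ A

open Topology unitInterval

section Deformation

variable {X : Type*} [TopologicalSpace X]

def DeformsIntoOn (u : X × I → X) (U A : Set X) : Prop :=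
  ContinuousOn u (U ×ˢ univ) ∧ (∀ x ∈ U, u (x, 0) = x) ∧ ∀ x ∈ U, ∀ t, t ≠ 0 → u (x, t) ∈ A

theorem exists_deformsIntoOn_of_section {Y : Type*} [TopologicalSpace Y] {p : Y → X}
    (hp : Continuous p) {V : Set X} {s : V → Y} (hs : Continuous s) (hps : ∀ v, p (s v) = v)
    {Φ : Y × I → Y} (hΦ : Continuous Φ) (hΦ0 : ∀ y, Φ (y, 0) = y) {A : Set X}
    (hΦA : ∀ y t, t ≠ 0 → p (Φ (y, t)) ∈ A) :
    ∃ u : X × I → X, DeformsIntoOn u (interior V) A := by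
  classical
  let u : X × I → X := fun q => if h : q.1 ∈ V then p (Φ (s ⟨q.1, h⟩, q.2)) else q.1
  have hu : ∀ x (hx : x ∈ V) t, u (x, t) = p (Φ (s ⟨x, hx⟩, t)) := fun x hx t => dif_pos hx
  refine ⟨u, ?_, fun x hx => ?_, fun x hx t ht => ?_⟩
  · rw [continuousOn_iff_continuous_domRestrict]
    have : (interior V ×ˢ univ).domRestrict u =
        fun q => p (Φ (s (inclusion interior_subset ⟨q.1.1, q.2.1⟩), q.1.2)) := by
      ext ⟨⟨x, t⟩, hx, -⟩
      exact hu x _ t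
    rw [this]
    fun_prop
  · rw [hu x (interior_subset hx), hΦ0, hps]
  · rw [hu x (interior_subset hx)]
    exact hΦA _ t ht

theorem DeformsIntoOn.translate {G : Type*} [Group G] [TopologicalSpace G] [IsTopologicalGroup G]
    {H : Subgroup G} {u : G × I → G} {V : Set G} (hu : DeformsIntoOn u V H) {g : G}
    {γ : I → G} (hγ : Continuous γ) (hγ0 : γ 0 = g) (hγH : ∀ t, t ≠ 0 → γ t ∈ H) :
    DeformsIntoOn (fun q => γ q.2 * u (g⁻¹ * q.1, q.2)) ((g⁻¹ * ·) ⁻¹' V) H := by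
  refine ⟨?_, fun x hx => ?_, fun x hx t ht => H.mul_mem (hγH t ht) (hu.2.2 _ hx t ht)⟩
  · refine (hγ.comp continuous_snd).continuousOn.mul (hu.1.comp (by fun_prop) ?_)
    exact fun q hq => ⟨hq.1, mem_univ _⟩
  · simp only [hu.2.1 _ hx, hγ0, mul_inv_cancel_left]

end Deformation

section Telescope

noncomputable def clampMul (t : I) (c : ℝ) : I := projIcc 0 1 zero_le_one (t * c)

@[simp] lemma clampMul_zero_left (c : ℝ) : clampMul 0 c = 0 := by
  simp [clampMul]

@[simp] lemma clampMul_zero_right (t : I) : clampMul t 0 = 0 := by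
  simp [clampMul]

lemma clampMul_ne_zero {t : I} (ht : t ≠ 0) {c : ℝ} (hc : 0 < c) : clampMul t c ≠ 0 := by
  have htc : 0 < (t : ℝ) * c := mul_pos (unitInterval.pos_iff_ne_zero.2 ht) hc
  intro h
  have := congrArg Subtype.val h
  simp only [clampMul, coe_projIcc, Icc.coe_zero] at this
  have hpos : (0 : ℝ) < max 0 (min 1 (t * c)) := lt_max_of_lt_right (lt_min zero_lt_one htc)
  linarith

@[fun_prop]
lemma Continuous.clampMul {Z : Type*} [TopologicalSpace Z] {f : Z → I} {g : Z → ℝ}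
    (hf : Continuous f) (hg : Continuous g) : Continuous fun z => clampMul (f z) (g z) :=
  continuous_projIcc.comp ((continuous_subtype_val.comp hf).mul hg)

def weightSum {ι α : Type*} (w : ι → α → ℝ) (l : List ι) (x : α) : ℝ := (l.map fun i => w i x).sum

lemma weightSum_filter {ι α : Type*} (w : ι → α → ℝ) (l : List ι) (x : α) :
    weightSum w (l.filter fun i => w i x ≠ 0) x = weightSum w l x := by
  induction l with
  | nil => rfl
  | cons j l ih =>
    by_cases h : w j x = 0 <;> simp_all [weightSum]

@[fun_prop]
lemma Continuous.weightSum {ι Z : Type*} [TopologicalSpace Z] {w : ι → Z → ℝ} {l : List ι}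
    (hw : ∀ i ∈ l, Continuous (w i)) : Continuous (weightSum w l) :=
  continuous_list_sum l hw

theorem Finset.sort_filter {α : Type*} [LinearOrder α] (s : Finset α) (p : α → Prop)
    [DecidablePred p] : (s.filter p).sort (· ≤ ·) = (s.sort (· ≤ ·)).filter (p ·) := by
  refine List.Perm.eq_of_pairwise' (Finset.pairwise_sort _ _)
    ((Finset.pairwise_sort _ _).filter _) ?_
  refine (List.perm_ext_iff_of_nodup (Finset.sort_nodup _ _)
    ((Finset.sort_nodup _ _).filter _)).2 fun a => ?_
  simp

lemma weightSum_sort {ι α : Type*} [LinearOrder ι] (w : ι → α → ℝ) (s : Finset ι) (x : α) :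
    weightSum w (s.sort (· ≤ ·)) x = ∑ i ∈ s, w i x := by
  rw [weightSum, ((Finset.sort_perm_toList s (· ≤ ·)).map _).sum_eq, Finset.sum_map_toList]

variable {G : Type*} [Group G] {ι : Type*}

noncomputable def telescope (u : ι → G × I → G) (w : ι → G → ℝ) : List ι → G × I → G
  | [], q => q.1
  | j :: l, q => u j (q.1, clampMul q.2 (weightSum w (j :: l) q.1)) *
      (u j (q.1, clampMul q.2 (weightSum w l q.1)))⁻¹ * telescope u w l q

variable (u : ι → G × I → G) (w : ι → G → ℝ)

@[simp] lemma telescope_zero (l : List ι) (x : G) : telescope u w l (x, 0) = x := by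
  induction l with
  | nil => rfl
  | cons j l ih => simp [telescope, ih]

lemma telescope_filter (l : List ι) (x : G) (t : I) :
    telescope u w (l.filter fun i => w i x ≠ 0) (x, t) = telescope u w l (x, t) := by
  induction l with
  | nil => rfl
  | cons j l ih =>
    by_cases h : w j x = 0
    · have hsum : weightSum w (j :: l) x = weightSum w l x := by simp [weightSum, h]
      rw [List.filter_cons_of_neg (by simp [h]), ih]
      simp [telescope, hsum]
    · have hsum := weightSum_filter w l x
      simp only [List.filter_cons, ne_eq, h, not_false_eq_true, decide_true, if_true, telescope,
        ih]
      simp only [weightSum, List.map_cons, List.sum_cons] at hsum ⊢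
      rw [hsum]

lemma telescope_sort_eq_of_support_subset [LinearOrder ι] {x : G} {s s' : Finset ι}
    (hs : ∀ i, w i x ≠ 0 → i ∈ s) (hs' : ∀ i, w i x ≠ 0 → i ∈ s') (t : I) :
    telescope u w (s.sort (· ≤ ·)) (x, t) = telescope u w (s'.sort (· ≤ ·)) (x, t) := by
  classical
  have hfilter : s.filter (w · x ≠ 0) = s'.filter (w · x ≠ 0) := by
    ext i
    simp only [Finset.mem_filter]
    exact ⟨fun h => ⟨hs' i h.2, h.2⟩, fun h => ⟨hs i h.2, h.2⟩⟩
  rw [← telescope_filter u w (s.sort _), ← telescope_filter u w (s'.sort _), ← Finset.sort_filter,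
    ← Finset.sort_filter, hfilter]

variable {u} {w}

/-- All `u i` that start at `x` and enter `H` agree modulo `H` at each time, so the factors of
`telescope` cancel modulo `H`. -/
lemma telescope_coset {H : Subgroup G} {x : G} {l : List ι}
    (hl : ∀ i ∈ l, u i (x, 0) = x ∧ ∀ s, s ≠ 0 → u i (x, s) ∈ H) {i : ι} (hi0 : u i (x, 0) = x)
    (hiH : ∀ s, s ≠ 0 → u i (x, s) ∈ H) (t : I) :
    (↑(telescope u w l (x, t)) : G ⧸ H) = ↑(u i (x, clampMul t (weightSum w l x))) := by
  induction l generalizing i with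
  | nil => simp [telescope, weightSum, hi0]
  | cons j l ih =>
    have hj := hl j List.mem_cons_self
    have hrest := ih (fun k hk => hl k (List.mem_cons_of_mem _ hk)) hj.1 hj.2
    have hji : (↑(u j (x, clampMul t (weightSum w (j :: l) x))) : G ⧸ H) =
        ↑(u i (x, clampMul t (weightSum w (j :: l) x))) := by
      rcases eq_or_ne (clampMul t (weightSum w (j :: l) x)) 0 with h | h
      · rw [h, hj.1, hi0]
      · exact QuotientGroup.eq.2 (H.mul_mem (H.inv_mem (hj.2 _ h)) (hiH _ h))
    rw [← hji]
    refine QuotientGroup.eq.2 ?_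
    simpa [telescope, mul_assoc] using QuotientGroup.eq.1 hrest

lemma telescope_mem {H : Subgroup G} {x : G} {l : List ι}
    (hl : ∀ i ∈ l, u i (x, 0) = x ∧ ∀ s, s ≠ 0 → u i (x, s) ∈ H) (hw : 0 < weightSum w l x)
    {t : I} (ht : t ≠ 0) : telescope u w l (x, t) ∈ H := by
  obtain ⟨i, hi⟩ : ∃ i, i ∈ l := by
    cases l with
    | nil => simp [weightSum] at hw
    | cons i _ => exact ⟨i, List.mem_cons_self⟩
  have hc := telescope_coset (w := w) hl (hl i hi).1 (hl i hi).2 t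
  have hiH := (hl i hi).2 _ (clampMul_ne_zero ht hw)
  simpa using H.mul_mem hiH (QuotientGroup.eq.1 hc.symm)

variable [TopologicalSpace G] [IsTopologicalGroup G]

lemma continuousAt_telescope {l : List ι} {x : G} (hu : ∀ i ∈ l, ∀ s, ContinuousAt (u i) (x, s))
    (hw : ∀ i ∈ l, Continuous (w i)) (t : I) : ContinuousAt (telescope u w l) (x, t) := by
  induction l with
  | nil => exact continuousAt_fst
  | cons j l ih =>
    have hsum : ∀ l' : List ι, l' ⊆ j :: l → ContinuousAt
        (fun q : G × I => u j (q.1, clampMul q.2 (weightSum w l' q.1))) (x, t) := by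
      intro l' hl'
      refine ContinuousAt.comp (f := fun q : G × I => (q.1, clampMul q.2 (weightSum w l' q.1)))
        (hu j List.mem_cons_self _) (Continuous.continuousAt ?_)
      have := Continuous.weightSum fun i hi => hw i (hl' hi)
      fun_prop
    have hrest := ih (fun i hi => hu i (List.mem_cons_of_mem _ hi))
      fun i hi => hw i (List.mem_cons_of_mem _ hi)
    exact ((hsum _ (List.Subset.refl _)).mul (hsum l (List.subset_cons_self _ _)).inv).mul hrest

end Telescope

theorem Subgroup.homotopyDense_of_forall_deformsIntoOn {G : Type*} [Group G] [TopologicalSpace G]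
    [IsTopologicalGroup G] [ParacompactSpace G] (H : Subgroup G)
    (h : ∀ x : G, ∃ U u, IsOpen U ∧ x ∈ U ∧ DeformsIntoOn u U H) : HomotopyDense (H : Set G) := by
  choose U u hUo hxU hu using h
  let : LinearOrder G := IsWellOrder.linearOrder WellOrderingRel
  obtain ⟨ρ, hρ⟩ := PartitionOfUnity.exists_isSubordinate isClosed_univ U hUo
    fun x _ => mem_iUnion.2 ⟨x, hxU x⟩
  let w : G → G → ℝ := fun i => ρ i
  have hsupp : ∀ x i, w i x ≠ 0 → i ∈ ρ.finsupport x := fun x i h => (ρ.mem_finsupport x).2 h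
  refine ⟨fun q => telescope u w ((ρ.finsupport q.1).sort (· ≤ ·)) q, ?_, fun x => by simp,
    fun x t ht => telescope_mem (fun i hi => ?_) ?_ ht⟩
  · refine continuous_iff_continuousAt.2 fun ⟨x₀, t₀⟩ => ?_
    refine ContinuousAt.congr (f := telescope u w ((ρ.fintsupport x₀).sort (· ≤ ·))) ?_ ?_
    · refine continuousAt_telescope (fun i hi s => ?_) (fun i _ => (ρ i).continuous) t₀
      have hx₀ := hρ i ((ρ.mem_fintsupport_iff x₀ i).1 ((Finset.mem_sort _).1 hi))
      exact (hu i).1.continuousAt (((hUo i).prod isOpen_univ).mem_nhds ⟨hx₀, mem_univ s⟩)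
    · filter_upwards [continuousAt_fst.eventually (ρ.eventually_finsupport_subset x₀)]
      rintro ⟨y, t⟩ hy
      exact telescope_sort_eq_of_support_subset u w (fun i h => hy (hsupp y i h)) (hsupp y) t
  · have hx : x ∈ U i := hρ i <| subset_tsupport _ <|
      Function.mem_support.2 ((ρ.mem_finsupport x).1 ((Finset.mem_sort _).1 hi))
    exact ⟨(hu i).2.1 x hx, (hu i).2.2 x hx⟩
  · rw [weightSum_sort]
    simp [w, ρ.sum_finsupport (mem_univ x)]

def Box (X : ℕ → Type*) : Type _ := ∀ n, X n

instance {X : ℕ → Type*} [∀ n, TopologicalSpace (X n)] : TopologicalSpace (Box X) := boxTop X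

namespace Box

variable {X : ℕ → Type*} [∀ n, TopologicalSpace (X n)]

lemma isOpen_pi {U : ∀ n, Set (X n)} (hU : ∀ n, IsOpen (U n)) :
    IsOpen {x : Box X | ∀ n, x n ∈ U n} :=
  isOpen_generateFrom_of_mem ⟨U, hU, by ext; exact Set.mem_univ_pi.symm⟩

lemma pi_mem_nhds {x : Box X} {U : ∀ n, Set (X n)} (hU : ∀ n, U n ∈ 𝓝 (x n)) :
    {y : Box X | ∀ n, y n ∈ U n} ∈ 𝓝 x :=
  mem_of_superset ((isOpen_pi fun _ => isOpen_interior).mem_nhds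
    fun n => mem_interior_iff_mem_nhds.2 (hU n)) fun _ hy n => interior_subset (hy n)

lemma continuous_of_eventually_forall_mem {Y : Type*} [TopologicalSpace Y] {f : Y → Box X}
    (h : ∀ y (U : ∀ n, Set (X n)), (∀ n, IsOpen (U n)) → (∀ n, f y n ∈ U n) →
      ∀ᶠ y' in 𝓝 y, ∀ n, f y' n ∈ U n) : Continuous f := by
  refine continuous_generateFrom_iff.2 ?_
  rintro _ ⟨U, hU, rfl⟩
  exact isOpen_iff_mem_nhds.2 fun y hy =>
    (h y U hU fun n => hy n trivial).mono fun _ h' n _ => h' n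

end Box

/-- The small box product `⊡ₙ Aₙ` of the pointed subspaces `(Aₙ, bₙ)`. -/
def smallBox {X : ℕ → Type*} (A : ∀ n, Set (X n)) (b : ∀ n, X n) : Set (Box X) :=
  {x | (∀ n, x n ∈ A n) ∧ ∀ᶠ n in atTop, x n = b n}

section SmallBox

variable {X : ℕ → Type*} {A : ∀ n, Set (X n)} {b : ∀ n, X n} {K : Type*}

def smallBoxMap (f : ∀ n, A n × K → A n)
    (hf : ∀ n (a : A n) k, (a : X n) = b n → (f n (a, k) : X n) = b n)
    (q : smallBox A b × K) : smallBox A b :=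
  ⟨fun n => f n (⟨q.1.1 n, q.1.2.1 n⟩, q.2), fun n => (f n _).2,
    q.1.2.2.mono fun n hn => hf n _ _ hn⟩

variable {f : ∀ n, A n × K → A n} {hf : ∀ n (a : A n) k, (a : X n) = b n → (f n (a, k) : X n) = b n}

variable [∀ n, TopologicalSpace (X n)] [TopologicalSpace K]

/-- Box continuity needs a uniform neighbourhood in `K` for all coordinates: beyond the last
coordinate of `z` off the base point it comes from compactness of `K`, by the tube lemma. -/
theorem continuous_smallBoxMap [CompactSpace K] (hfc : ∀ n, Continuous (f n)) :
    Continuous (smallBoxMap f hf) := by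
  refine continuous_induced_rng.2 <|
    Box.continuous_of_eventually_forall_mem fun ⟨z, k⟩ U hU hzk => ?_
  obtain ⟨N, hN⟩ := eventually_atTop.1 z.2.2
  have key : ∀ n, ∃ J ∈ 𝓝 k, (N ≤ n → J = univ) ∧ ∃ O ∈ 𝓝 (z.1 n),
      ∀ a : A n, (a : X n) ∈ O → ∀ s ∈ J, (f n (a, s) : X n) ∈ U n := by
    intro n
    have hpre : ∀ s, (f n (⟨z.1 n, z.2.1 n⟩, s) : X n) ∈ U n →
        f n ⁻¹' (Subtype.val ⁻¹' U n) ∈ 𝓝 (⟨z.1 n, z.2.1 n⟩, s) := fun s hs =>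
      (hfc n).continuousAt.preimage_mem_nhds ((hU n).preimage continuous_subtype_val |>.mem_nhds hs)
    suffices ∃ J ∈ 𝓝 k, (N ≤ n → J = univ) ∧
        ∀ᶠ a in 𝓝 ⟨z.1 n, z.2.1 n⟩, ∀ s ∈ J, (f n (a, s) : X n) ∈ U n by
      obtain ⟨J, hJ, hJN, hO⟩ := this
      obtain ⟨O, hO, hOsub⟩ := (mem_nhds_subtype _ _ _).1 hO
      exact ⟨J, hJ, hJN, O, hO, fun a ha => hOsub ha⟩
    by_cases hn : N ≤ n
    · refine ⟨univ, univ_mem, fun _ => rfl,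
        isCompact_univ.eventually_forall_of_forall_eventually fun s _ => hpre s ?_⟩
      rw [hf n _ s (hN n hn), ← hf n ⟨z.1 n, z.2.1 n⟩ k (hN n hn)]
      exact hzk n
    · obtain ⟨O, hO, J, hJ, hOJ⟩ := mem_nhds_prod_iff.1 (hpre k (hzk n))
      exact ⟨J, hJ, fun h => absurd h hn, Filter.mem_of_superset hO fun a ha s hs => hOJ ⟨ha, hs⟩⟩
  choose J hJ hJN O hO hOJ using key
  have hJmem : ⋂ n ∈ Finset.range N, J n ∈ 𝓝 k := (biInter_finset_mem _).2 fun n _ => hJ n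
  filter_upwards [prod_mem_nhds
    (continuous_subtype_val.continuousAt.preimage_mem_nhds (Box.pi_mem_nhds hO)) hJmem]
  rintro ⟨z', s⟩ ⟨hz', hs⟩ n
  refine hOJ n _ (hz' n) s ?_
  rcases lt_or_ge n N with hn | hn
  · exact mem_iInter₂.1 hs n (Finset.mem_range.2 hn)
  · exact hJN n hn ▸ mem_univ s

end SmallBox

theorem HomotopyDense.exists_fix_one {Γ : Type*} [Group Γ] [TopologicalSpace Γ]
    [IsTopologicalGroup Γ] {K : Subgroup Γ} (h : HomotopyDense (K : Set Γ)) :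
    ∃ φ : Γ × I → Γ, Continuous φ ∧ (∀ x, φ (x, 0) = x) ∧ (∀ t, φ (1, t) = 1) ∧
      ∀ x t, t ≠ 0 → φ (x, t) ∈ K := by
  obtain ⟨φ, hφ, hφ0, hφK⟩ := h
  refine ⟨fun q => φ q * (φ (1, q.2))⁻¹, by fun_prop, fun x => ?_, fun t => mul_inv_cancel _,
    fun x t ht => K.mul_mem (hφK x t ht) (K.inv_mem (hφK 1 t ht))⟩
  simp only [hφ0, inv_one, mul_one]

theorem homotopyDense_of_smallBox_section_general (G : Type*) [Group G] [TopologicalSpace G]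
    [IsTopologicalGroup G] [ParacompactSpace G] (Gn : ℕ → Subgroup G)
    (hunion : ∀ g : G, ∃ n, g ∈ Gn n)
    (p : {x : ∀ _ : ℕ, G // (∀ n, x n ∈ Gn n) ∧ ∀ᶠ n in Filter.atTop, x n = 1} → G)
    (hp : ∀ x, ∀ N : ℕ, (∀ n, N ≤ n → x.val n = 1) →
      p x = ((List.range N).map x.val).prod)
    (hpc : @Continuous _ _ ((boxTop fun _ : ℕ => G).induced Subtype.val)
      inferInstance p)
    (hsec : ∃ V ∈ nhds (1 : G),
      ∃ s : V → {x : ∀ _ : ℕ, G // (∀ n, x n ∈ Gn n) ∧ ∀ᶠ n in Filter.atTop, x n = 1},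
        @Continuous _ _ inferInstance ((boxTop fun _ : ℕ => G).induced Subtype.val) s ∧
        ∀ v : V, p (s v) = v)
    (H : Subgroup G)
    (hHD : ∀ n, HomotopyDense {g : Gn n | (g : G) ∈ H}) :
    HomotopyDense (H : Set G) := by
  obtain ⟨V, hV, s, hs, hps⟩ := hsec
  let S := smallBox (X := fun _ => G) (fun n => Gn n) 1
  have hpc' : Continuous (X := S) p := hpc
  have hs' : Continuous (Y := S) s := hs
  choose ψ hψc hψ0 hψ1 hψH using fun n => (hHD n).exists_fix_one (K := H.subgroupOf (Gn n))
  let Φ := smallBoxMap (X := fun _ => G) (A := fun n => Gn n) (b := 1) ψ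
    fun n a k ha => by rw [show a = 1 from Subtype.ext ha, hψ1]; rfl
  have hΦ0 : ∀ z, Φ (z, 0) = z := fun z =>
    Subtype.ext <| funext fun n => congrArg Subtype.val (hψ0 n _)
  have hpΦ : ∀ z t, t ≠ 0 → p (Φ (z, t)) ∈ H := by
    intro z t ht
    obtain ⟨N, hN⟩ := eventually_atTop.1 (Φ (z, t)).2.2
    rw [hp _ N hN]
    exact H.list_prod_mem fun x hx => by
      obtain ⟨n, -, rfl⟩ := List.mem_map.1 hx
      exact hψH n _ t ht
  obtain ⟨h, hh⟩ := exists_deformsIntoOn_of_section hpc' hs' hps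
    (continuous_smallBoxMap hψc) hΦ0 hpΦ
  refine H.homotopyDense_of_forall_deformsIntoOn fun g => ?_
  obtain ⟨m, hm⟩ := hunion g
  obtain ⟨φ, hφc, hφ0, hφH⟩ := hHD m
  exact ⟨_, _, isOpen_interior.preimage (continuous_const_mul g⁻¹),
    by simpa using mem_interior_iff_mem_nhds.2 hV,
    hh.translate (γ := fun t => (φ (⟨g, hm⟩, t) : G)) (by fun_prop) (by simp [hφ0])
      fun t ht => hφH _ t ht⟩

/-- Let `G` be a paracompact topological group which is the union of an increasing
sequence of subgroups `(Gₙ)`, with continuous multiplication map `p : ⊡ₙ Gₙ → G`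
admitting a local section at the identity, and let `H ≤ G`.  If `H ∩ Gₙ` is homotopy
dense in `Gₙ` for each `n`, then `H` is homotopy dense in `G`. -/
theorem homotopyDense_of_smallBox_section (G : Type*) [Group G] [TopologicalSpace G]
    [IsTopologicalGroup G] [ParacompactSpace G] (Gn : ℕ → Subgroup G)
    (hmono : Monotone Gn) (hunion : ∀ g : G, ∃ n, g ∈ Gn n)
    (p : {x : ∀ _ : ℕ, G // (∀ n, x n ∈ Gn n) ∧ ∀ᶠ n in Filter.atTop, x n = 1} → G)
    (hp : ∀ x, ∀ N : ℕ, (∀ n, N ≤ n → x.val n = 1) →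
      p x = ((List.range N).map x.val).prod)
    (hpc : @Continuous _ _ ((boxTop fun _ : ℕ => G).induced Subtype.val)
      inferInstance p)
    (hsec : ∃ V ∈ nhds (1 : G),
      ∃ s : V → {x : ∀ _ : ℕ, G // (∀ n, x n ∈ Gn n) ∧ ∀ᶠ n in Filter.atTop, x n = 1},
        @Continuous _ _ inferInstance ((boxTop fun _ : ℕ => G).induced Subtype.val) s ∧
        ∀ v : V, p (s v) = v)
    (H : Subgroup G)
    (hHD : ∀ n, HomotopyDense {g : Gn n | (g : G) ∈ H}) :
    HomotopyDense (H : Set G) :=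
  homotopyDense_of_smallBox_section_general G Gn hunion p hp hpc hsec H hHD
end
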